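/- Let X be a Lindelöf T1 space such that every nonempty open subset of X has cardinality at least kc(X). Then X is productively Lindelöf if, and only if, X has the pL property. -/

import Mathlib

open Set TopologicalSpace

/-- `U` is an open covering of `X`. -/
def IsOpenCover {X : Type*} [TopologicalSpace X] (U : Set (Set X)) : Prop :=
  (∀ A ∈ U, IsOpen A) ∧ ⋃₀ U = Set.univ

/-- `𝒴` is a Lindelöf collection of open coverings: for every choice of a finite
subfamily of each member, countably many of these finite families are cofinal. -/
def IsLindelofCollection {X : Type*} [TopologicalSpace X] (𝒴 : Set (Set (Set X))) : Prop :=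
  ∀ f : Set (Set X) → Finset (Set X), (∀ U ∈ 𝒴, ↑(f U) ⊆ U) →
    ∃ g : ℕ → Set (Set X), (∀ n, g n ∈ 𝒴) ∧ ∀ U ∈ 𝒴, ∃ n, ↑(f (g n)) ⊆ U

/-- The pL property. -/
def HasPL (X : Type*) [TopologicalSpace X] : Prop :=
  ∀ 𝒴 : Set (Set (Set X)), (∀ U ∈ 𝒴, IsOpenCover U) → IsLindelofCollection 𝒴 →
    ∃ A : ℕ → Set X, (∀ n, IsOpen (A n)) ∧
      ∀ x : X, ∀ U ∈ 𝒴, ∃ n, x ∈ A n ∧ A n ∈ U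

/-- `X` is productively Lindelöf. -/
def ProductivelyLindelof (X : Type u) [TopologicalSpace X] : Prop :=
  ∀ (Y : Type u) (_ : TopologicalSpace Y), LindelofSpace Y → LindelofSpace (X × Y)

/-- `W` is a covering of `X × Y` by open boxes. -/
def IsBoxCover {X Y : Type*} [TopologicalSpace X] [TopologicalSpace Y]
    (W : Set (Set X × Set Y)) : Prop :=
  (∀ w ∈ W, IsOpen w.1 ∧ IsOpen w.2) ∧ ∀ p : X × Y, ∃ w ∈ W, p.1 ∈ w.1 ∧ p.2 ∈ w.2

/-- `W` is ω-injective: each first factor occurs with only countably many second factors. -/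
def IsOmegaInjective {X Y : Type*} (W : Set (Set X × Set Y)) : Prop :=
  ∀ A : Set X, {B : Set Y | (A, B) ∈ W}.Countable

/-- `W` is injective: equal first factors imply equal second factors. -/
def IsInjectiveCover {X Y : Type*} (W : Set (Set X × Set Y)) : Prop :=
  ∀ w ∈ W, ∀ w' ∈ W, w.1 = w'.1 → w.2 = w'.2

/-- The box family `W` refines the covering `W0` of `X × Y`. -/
def BoxRefines {X Y : Type*} (W : Set (Set X × Set Y)) (W0 : Set (Set (X × Y))) : Prop :=
  ∀ w ∈ W, ∃ V ∈ W0, w.1 ×ˢ w.2 ⊆ V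

/-- `kc X`: the minimal cardinality of a covering of `X` by compact subspaces. -/
noncomputable def kc (X : Type*) [TopologicalSpace X] : Cardinal :=
  sInf {c : Cardinal | ∃ S : Set (Set X),
    (∀ K ∈ S, IsCompact K) ∧ ⋃₀ S = Set.univ ∧ Cardinal.mk S = c}

/-!
(⇒) Under the topology generated by the sets `F*`, a Lindelöf collection `𝒴` of open covers
is a Lindelöf space. The boxes `A × {A}*` cover `X × 𝒴`, and a countable subcover is the required
sequence `A n`.

(⇐) Let `c` be an open cover of `X × Y`, `Y` Lindelöf. Cover `X` by `kc X` compact sets `K`; the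
tube lemma and the Lindelöf property of `Y` give, for each `K`, countably many open boxes `U × V`
with `K ⊆ U` covering `K × Y`, each inside finitely many members of `c`. If there are uncountably
many boxes, there are at most `kc X` of them, and their first factors, nonempty open sets of
cardinality at least `kc X`, can be punctured (in a `T1` space) to pairwise distinct open sets.
For each `y`, the first factors of the boxes containing `y` form an open cover of `X`; these covers
form a Lindelöf collection, and pL gives a sequence `A n`. Each `A n` is the first factor of only
countably many boxes, so countably many boxes, hence countably many members of `c`, cover `X × Y`.
-/

universe u v

open scoped Cardinal

theorem LindelofSpace.exists_seq_iUnion_eq_univ {Z ι : Type*} [TopologicalSpace Z]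
    [LindelofSpace Z] [Nonempty Z] {O : ι → Set Z} (hO : ∀ i, IsOpen (O i))
    (hcov : ⋃ i, O i = univ) : ∃ s : ℕ → ι, ⋃ n, O (s n) = univ := by
  obtain ⟨r, hr, hrcov⟩ := isLindelof_univ.elim_countable_subcover O hO hcov.ge
  have hr_ne : r.Nonempty := by
    by_contra h
    simpa [not_nonempty_iff_eq_empty.mp h] using hrcov (mem_univ (Classical.arbitrary Z))
  obtain ⟨s, rfl⟩ := hr.exists_eq_range hr_ne
  exact ⟨s, univ_subset_iff.mp (by simpa using hrcov)⟩

theorem WellFounded.exists_forall_rel {ι α : Type*} {r : ι → ι → Prop} (hr : WellFounded r)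
    (P : ι → α → Prop) (R : ι → α → ι → α → Prop)
    (h : ∀ i (g : ∀ j, r j i → α), ∃ x, P i x ∧ ∀ j (hj : r j i), R i x j (g j hj)) :
    ∃ f : ι → α, ∀ i, P i (f i) ∧ ∀ j, r j i → R i (f i) j (f j) := by
  choose F hF using h
  refine ⟨hr.fix F, fun i => ?_⟩
  rw [hr.fix_eq F i]
  exact hF i fun j _ => hr.fix F j

theorem Set.exists_mem_forall_sdiff_singleton_ne {α J : Type u} (V : Set α) (W : J → Set α)
    (hJ : #J < #V) : ∃ x ∈ V, ∀ j, V \ {x} ≠ W j := by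
  set puncture : V → Set α := fun x => V \ {(x : α)}
  have hinj : Function.Injective puncture := by
    intro x y hxy
    by_contra hne
    have hx : (x : α) ∈ V \ {(y : α)} := ⟨x.2, fun h => hne (Subtype.ext h)⟩
    rw [← show puncture x = V \ {(y : α)} from hxy] at hx
    exact hx.2 rfl
  have hbad : #(puncture ⁻¹' range W) < #V :=
    (Cardinal.mk_preimage_of_injective _ _ hinj).trans_lt (Cardinal.mk_range_le.trans_lt hJ)
  obtain ⟨x, hx⟩ : ∃ x, x ∉ puncture ⁻¹' range W := by
    by_contra! h
    exact hbad.ne (by rw [eq_univ_of_forall h, Cardinal.mk_univ])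
  exact ⟨x, x.2, fun j hj => hx ⟨j, hj.symm⟩⟩

theorem exists_injective_sdiff_singleton {ι α : Type u} {κ : Cardinal.{u}} (hι : #ι ≤ κ)
    (U : ι → Set α) (hU : ∀ i, κ ≤ #(U i)) :
    ∃ pt : ι → α, (∀ i, pt i ∈ U i) ∧ Function.Injective fun i => U i \ {pt i} := by
  obtain ⟨r, _, hr⟩ := Cardinal.exists_ord_eq ι
  obtain ⟨pt, hpt⟩ := (IsWellFounded.wf (r := r)).exists_forall_rel (fun i x => x ∈ U i)
    (fun i x j y => U i \ {x} ≠ U j \ {y}) fun i g => by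
      have hlt : #{j // r j i} < #(U i) :=
        ((Cardinal.card_typein_lt i hr).trans_le hι).trans_le (hU i)
      obtain ⟨x, hx, hne⟩ := (U i).exists_mem_forall_sdiff_singleton_ne
        (fun j : {j // r j i} => U j \ {g j j.2}) hlt
      exact ⟨x, hx, fun j hj => hne ⟨j, hj⟩⟩
  refine ⟨pt, fun i => (hpt i).1, fun i j hij => ?_⟩
  rcases trichotomous_of r i j with h | h | h
  · exact absurd hij.symm ((hpt j).2 i h)
  · exact h
  · exact absurd hij ((hpt i).2 j h)

section CoverTopology

variable {X : Type*} (𝒴 : Set (Set (Set X)))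

def finsetStar (F : Finset (Set X)) : Set 𝒴 := {U | ↑F ⊆ (U : Set (Set X))}

theorem finsetStar_union [DecidableEq (Set X)] (F G : Finset (Set X)) :
    finsetStar 𝒴 (F ∪ G) = finsetStar 𝒴 F ∩ finsetStar 𝒴 G := by
  ext U
  simp [finsetStar, union_subset_iff]

abbrev coverTopology : TopologicalSpace 𝒴 := generateFrom (range (finsetStar 𝒴))

attribute [local instance] coverTopology

theorem isTopologicalBasis_finsetStar :
    IsTopologicalBasis (range (finsetStar 𝒴)) where
  exists_subset_inter := by
    classical
    rintro _ ⟨F, rfl⟩ _ ⟨G, rfl⟩ U hU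
    exact ⟨_, ⟨F ∪ G, rfl⟩, finsetStar_union 𝒴 F G ▸ hU, (finsetStar_union 𝒴 F G).le⟩
  sUnion_eq := sUnion_eq_univ_iff.mpr fun U => ⟨_, ⟨∅, rfl⟩, by simp [finsetStar]⟩
  eq_generateFrom := rfl

theorem IsLindelofCollection.lindelofSpace [TopologicalSpace X] (h : IsLindelofCollection 𝒴) :
    LindelofSpace 𝒴 := by
  refine ⟨isLindelof_of_countable_subcover fun c hc hcov => ?_⟩
  have hbasic : ∀ U : 𝒴, ∃ F i, U ∈ finsetStar 𝒴 F ∧ finsetStar 𝒴 F ⊆ c i := by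
    intro U
    obtain ⟨i, hi⟩ := mem_iUnion.mp (hcov (mem_univ U))
    obtain ⟨_, ⟨F, rfl⟩, hUF, hFc⟩ :=
      (isTopologicalBasis_finsetStar 𝒴).exists_subset_of_mem_open hi (hc i)
    exact ⟨F, i, hUF, hFc⟩
  choose F idx hUF hFc using hbasic
  classical
  obtain ⟨g, hg𝒴, hg⟩ := h (fun U => if hU : U ∈ 𝒴 then F ⟨U, hU⟩ else ∅)
    fun U hU => by simpa [finsetStar, dif_pos hU] using hUF ⟨U, hU⟩
  refine ⟨range fun n => idx ⟨g n, hg𝒴 n⟩, countable_range _, fun U _ => ?_⟩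
  obtain ⟨n, hn⟩ := hg U U.2
  refine mem_biUnion ⟨n, rfl⟩ (hFc _ ?_)
  simpa [finsetStar, dif_pos (hg𝒴 n)] using hn

theorem ProductivelyLindelof.hasPL {X : Type u} [TopologicalSpace X]
    (h : ProductivelyLindelof X) : HasPL X := by
  intro 𝒴 h𝒴 hlin
  have := h 𝒴 _ hlin.lindelofSpace
  rcases isEmpty_or_nonempty (X × 𝒴) with hempty | hne
  · exact ⟨fun _ => ∅, fun _ => isOpen_empty, fun x U hU => (hempty.false (x, ⟨U, hU⟩)).elim⟩
  let O : {A : Set X // IsOpen A} → Set (X × 𝒴) := fun A => A.1 ×ˢ finsetStar 𝒴 {A.1}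
  have hO : ∀ A, IsOpen (O A) :=
    fun A => A.2.prod ((isTopologicalBasis_finsetStar 𝒴).isOpen ⟨_, rfl⟩)
  have hcov : ⋃ A, O A = univ := by
    refine eq_univ_of_forall fun ⟨x, U⟩ => ?_
    obtain ⟨A, hAU, hxA⟩ := (h𝒴 U U.2).2 ▸ mem_univ x
    exact mem_iUnion.mpr ⟨⟨A, (h𝒴 U U.2).1 A hAU⟩, hxA, by simpa [finsetStar] using hAU⟩
  obtain ⟨s, hs⟩ := LindelofSpace.exists_seq_iUnion_eq_univ hO hcov
  refine ⟨fun n => (s n).1, fun n => (s n).2, fun x U hU => ?_⟩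
  obtain ⟨n, hxn, hUn⟩ := mem_iUnion.mp (hs ▸ mem_univ (x, (⟨U, hU⟩ : 𝒴)))
  exact ⟨n, hxn, by simpa [finsetStar] using hUn⟩

end CoverTopology

section BoxCovers

variable {X Y : Type*}

def boxSlice (W : Set (Set X × Set Y)) (y : Y) : Set (Set X) := {A | ∃ B, (A, B) ∈ W ∧ y ∈ B}

theorem IsInjectiveCover.isOmegaInjective {W : Set (Set X × Set Y)} (hW : IsInjectiveCover W) :
    IsOmegaInjective W :=
  fun _ => Subsingleton.countable fun _ hB _ hB' => hW _ hB _ hB' rfl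

theorem isOmegaInjective_range {ι : Type*} [Countable ι] (f : ι → Set X × Set Y) :
    IsOmegaInjective (range f) :=
  fun _ => (countable_range fun k => (f k).2).mono <| by
    rintro _ ⟨k, hk⟩
    exact ⟨k, congrArg Prod.snd hk⟩

theorem isInjectiveCover_range {ι : Type*} {f : ι → Set X × Set Y}
    (hf : Function.Injective fun k => (f k).1) : IsInjectiveCover (range f) := by
  rintro _ ⟨k, rfl⟩ _ ⟨k', rfl⟩ h
  rw [hf h]

variable [TopologicalSpace Y]

theorem exists_isOpen_forall_subset_boxSlice {W : Set (Set X × Set Y)}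
    (hW : ∀ w ∈ W, IsOpen w.2) {y : Y} {F : Finset (Set X)} (hF : ↑F ⊆ boxSlice W y) :
    ∃ N, IsOpen N ∧ y ∈ N ∧ ∀ y' ∈ N, ↑F ⊆ boxSlice W y' := by
  have hF' : ∀ A ∈ F, ∃ B, (A, B) ∈ W ∧ y ∈ B := fun A hA => hF hA
  choose! B hBW hyB using hF'
  exact ⟨⋂ A ∈ F, B A, isOpen_biInter_finset fun A hA => hW _ (hBW A hA), mem_iInter₂.mpr hyB,
    fun y' hy' A hA => ⟨B A, hBW A hA, mem_iInter₂.mp hy' A hA⟩⟩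

variable [TopologicalSpace X]

theorem IsBoxCover.isOpenCover_boxSlice {W : Set (Set X × Set Y)} (hW : IsBoxCover W) (y : Y) :
    IsOpenCover (boxSlice W y) := by
  refine ⟨fun A ⟨B, hAB, _⟩ => (hW.1 _ hAB).1, eq_univ_of_forall fun x => ?_⟩
  obtain ⟨w, hw, hx, hy⟩ := hW.2 (x, y)
  exact ⟨w.1, ⟨w.2, hw, hy⟩, hx⟩

theorem isLindelofCollection_range_boxSlice [LindelofSpace Y] [Nonempty Y]
    {W : Set (Set X × Set Y)} (hW : ∀ w ∈ W, IsOpen w.2) :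
    IsLindelofCollection (range (boxSlice W)) := by
  intro f hf
  choose N hNo hyN hN using fun y => exists_isOpen_forall_subset_boxSlice hW (hf _ ⟨y, rfl⟩)
  obtain ⟨s, hs⟩ := LindelofSpace.exists_seq_iUnion_eq_univ hNo
    (eq_univ_of_forall fun y => mem_iUnion.mpr ⟨y, hyN y⟩)
  refine ⟨fun n => boxSlice W (s n), fun n => ⟨s n, rfl⟩, ?_⟩
  rintro _ ⟨y, rfl⟩
  obtain ⟨n, hn⟩ := mem_iUnion.mp (hs ▸ mem_univ y)
  exact ⟨n, hN (s n) y hn⟩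

theorem HasPL.exists_countable_isBoxCover_subset (hpl : HasPL X) [LindelofSpace Y] [Nonempty Y]
    {W : Set (Set X × Set Y)} (hW : IsBoxCover W) (hWω : IsOmegaInjective W) :
    ∃ W' ⊆ W, W'.Countable ∧ IsBoxCover W' := by
  obtain ⟨A, -, hA⟩ := hpl _ (by rintro _ ⟨y, rfl⟩; exact hW.isOpenCover_boxSlice y)
    (isLindelofCollection_range_boxSlice fun w hw => (hW.1 w hw).2)
  have hsub : ⋃ n, Prod.mk (A n) '' {B | (A n, B) ∈ W} ⊆ W :=
    iUnion_subset fun n => image_subset_iff.mpr fun _ hB => hB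
  refine ⟨_, hsub, countable_iUnion fun n => (hWω (A n)).image _,
    fun w hw => hW.1 w (hsub hw), fun p => ?_⟩
  obtain ⟨n, hxn, B, hnB, hyB⟩ := hA p.1 _ ⟨p.2, rfl⟩
  exact ⟨(A n, B), mem_iUnion.mpr ⟨n, B, hnB, rfl⟩, hxn, hyB⟩

end BoxCovers

section Tubes

variable {X Y ι : Type*} [TopologicalSpace X] [TopologicalSpace Y] {c : ι → Set (X × Y)}

theorem exists_tube_subset_finite_iUnion (hc : ∀ i, IsOpen (c i)) (hcov : ⋃ i, c i = univ)
    {K : Set X} (hK : IsCompact K) (y : Y) :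
    ∃ (U : Set X) (V : Set Y) (G : Finset ι),
      IsOpen U ∧ IsOpen V ∧ K ⊆ U ∧ y ∈ V ∧ U ×ˢ V ⊆ ⋃ i ∈ G, c i := by
  obtain ⟨G, hG⟩ := (hK.prod isCompact_singleton).elim_finite_subcover c hc (hcov ▸ subset_univ _)
  obtain ⟨U, V, hU, hV, hKU, hyV, hUV⟩ :=
    generalized_tube_lemma hK isCompact_singleton (isOpen_biUnion fun i _ => hc i) hG
  exact ⟨U, V, G, hU, hV, hKU, singleton_subset_iff.mp hyV, hUV⟩

theorem exists_seq_tubes [LindelofSpace Y] [Nonempty Y] (hc : ∀ i, IsOpen (c i))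
    (hcov : ⋃ i, c i = univ) {K : Set X} (hK : IsCompact K) :
    ∃ (U : ℕ → Set X) (V : ℕ → Set Y) (G : ℕ → Finset ι), (∀ n, IsOpen (U n) ∧ K ⊆ U n) ∧
      (∀ n, IsOpen (V n)) ∧ ⋃ n, V n = univ ∧ ∀ n, U n ×ˢ V n ⊆ ⋃ i ∈ G n, c i := by
  choose U V G hU hV hKU hyV hUV using exists_tube_subset_finite_iUnion hc hcov hK
  obtain ⟨s, hs⟩ := LindelofSpace.exists_seq_iUnion_eq_univ hV
    (eq_univ_of_forall fun y => mem_iUnion.mpr ⟨y, hyV y⟩)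
  exact ⟨U ∘ s, V ∘ s, G ∘ s, fun n => ⟨hU _, hKU _⟩, fun n => hV _, hs, fun n => hUV _⟩

theorem BoxRefines.exists_countable_subcover {κ : Type*} {U : κ → Set X} {V : κ → Set Y}
    {G : κ → Finset ι} (hUVG : ∀ k, U k ×ˢ V k ⊆ ⋃ i ∈ G k, c i) {W : Set (Set X × Set Y)}
    (hWc : W.Countable) (hW : IsBoxCover W) (hWUV : BoxRefines W (range fun k => U k ×ˢ V k)) :
    ∃ t : Set ι, t.Countable ∧ univ ⊆ ⋃ i ∈ t, c i := by
  choose O hO hwO using fun w : W => hWUV w w.2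
  choose k hk using hO
  have := hWc.to_subtype
  refine ⟨⋃ w : W, ↑(G (k w)), countable_iUnion fun w => (G _).countable_toSet, fun p _ => ?_⟩
  obtain ⟨w, hw, hpw⟩ := hW.2 p
  obtain ⟨i, hi, hpi⟩ := mem_iUnion₂.mp (hUVG _ ((hk ⟨w, hw⟩).symm ▸ hwO ⟨w, hw⟩ hpw))
  exact mem_iUnion₂.mpr ⟨i, mem_iUnion.mpr ⟨⟨w, hw⟩, hi⟩, hpi⟩

end Tubes

theorem exists_nonempty_compact_cover_mk_le_kc (X : Type u) [TopologicalSpace X] :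
    ∃ S : Set (Set X), (∀ K ∈ S, IsCompact K ∧ K.Nonempty) ∧ ⋃₀ S = univ ∧ #S ≤ kc X := by
  obtain ⟨S, hS, hScov, hSkc⟩ : ∃ S : Set (Set X),
      (∀ K ∈ S, IsCompact K) ∧ ⋃₀ S = univ ∧ #S = kc X :=
    csInf_mem (s := {c | ∃ S : Set (Set X), (∀ K ∈ S, IsCompact K) ∧ ⋃₀ S = univ ∧ #S = c})
      ⟨_, range singleton, by rintro _ ⟨x, rfl⟩; exact isCompact_singleton,
        by simpa using iUnion_of_singleton X, rfl⟩
  refine ⟨{K ∈ S | K.Nonempty}, fun K hK => ⟨hS K hK.1, hK.2⟩, eq_univ_of_forall fun x => ?_,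
    hSkc ▸ Cardinal.mk_le_mk_of_subset (sep_subset _ _)⟩
  obtain ⟨K, hK, hx⟩ := hScov ▸ mem_univ x
  exact ⟨K, ⟨hK, x, hx⟩, hx⟩

section Refinement

variable {X : Type u} {Y : Type*} {ι : Type u} [TopologicalSpace X] [TopologicalSpace Y]
  {U : ι → Set X} {V : ι → Set Y}

theorem isBoxCover_range (hU : ∀ k, IsOpen (U k)) (hV : ∀ k, IsOpen (V k))
    (hcov : ∀ p : X × Y, ∃ k, p.1 ∈ U k ∧ p.2 ∈ V k) :
    IsBoxCover (range fun k => (U k, V k)) := by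
  refine ⟨by rintro _ ⟨k, rfl⟩; exact ⟨hU k, hV k⟩, fun p => ?_⟩
  obtain ⟨k, hk⟩ := hcov p
  exact ⟨_, ⟨k, rfl⟩, hk⟩

theorem exists_isInjectiveCover_refinement [T1Space X] {κ : Cardinal.{u}}
    (hU : ∀ k, IsOpen (U k)) (hV : ∀ k, IsOpen (V k)) (hUκ : ∀ k, κ ≤ #(U k))
    (hι : #(ι × Bool) ≤ κ) (hcov : ∀ p : X × Y, ∃ k, p.1 ∈ U k ∧ p.2 ∈ V k) :
    ∃ W, IsBoxCover W ∧ IsInjectiveCover W ∧ BoxRefines W (range fun k => U k ×ˢ V k) := by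
  -- each box is taken twice, punctured at distinct points, so that the two copies still cover it
  obtain ⟨pt, -, hinj⟩ := exists_injective_sdiff_singleton hι (fun k => U k.1) fun k => hUκ k.1
  refine ⟨range fun k : ι × Bool => (U k.1 \ {pt k}, V k.1),
    isBoxCover_range (fun k => (hU k.1).sdiff isClosed_singleton) (fun k => hV k.1) fun p => ?_,
    isInjectiveCover_range hinj, ?_⟩
  · obtain ⟨k, hx, hy⟩ := hcov p
    have hpt : pt (k, false) ≠ pt (k, true) := fun h =>
      Bool.false_ne_true (congrArg Prod.snd (@hinj (k, false) (k, true) (by simp only [h])))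
    by_cases hxf : p.1 = pt (k, false)
    · exact ⟨(k, true), ⟨hx, fun h => hpt (hxf.symm.trans h)⟩, hy⟩
    · exact ⟨(k, false), ⟨hx, hxf⟩, hy⟩
  · rintro _ ⟨k, rfl⟩
    exact ⟨_, ⟨k.1, rfl⟩, prod_mono sdiff_subset subset_rfl⟩

theorem exists_isOmegaInjective_refinement [T1Space X] {κ : Cardinal.{u}}
    (hU : ∀ k, IsOpen (U k)) (hV : ∀ k, IsOpen (V k)) (hUκ : ∀ k, κ ≤ #(U k))
    (hι : #ι ≤ max κ ℵ₀) (hcov : ∀ p : X × Y, ∃ k, p.1 ∈ U k ∧ p.2 ∈ V k) :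
    ∃ W, IsBoxCover W ∧ IsOmegaInjective W ∧ BoxRefines W (range fun k => U k ×ˢ V k) := by
  by_cases hιc : Countable ι
  · refine ⟨_, isBoxCover_range hU hV hcov, isOmegaInjective_range _, ?_⟩
    rintro _ ⟨k, rfl⟩
    exact ⟨_, ⟨k, rfl⟩, subset_rfl⟩
  have hℵ₀ : ℵ₀ < #ι := lt_of_not_ge (mt Cardinal.mk_le_aleph0_iff.mp hιc)
  have hιB : #(ι × Bool) ≤ κ := calc
    #(ι × Bool) = #ι * 2 := by simp [Cardinal.mk_prod]
    _ = #ι := Cardinal.mul_eq_left hℵ₀.le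
      ((Cardinal.natCast_lt_aleph0 (n := 2)).le.trans hℵ₀.le) two_ne_zero
    _ ≤ κ := (le_max_iff.mp hι).resolve_right hℵ₀.not_ge
  obtain ⟨W, hW, hWinj, hWU⟩ := exists_isInjectiveCover_refinement hU hV hUκ hιB hcov
  exact ⟨W, hW, hWinj.isOmegaInjective, hWU⟩

end Refinement

theorem HasPL.lindelofSpace_prod {X : Type u} [TopologicalSpace X] [T1Space X]
    (hcard : ∀ U : Set X, IsOpen U → U.Nonempty → kc X ≤ #U) (hpl : HasPL X)
    (Y : Type v) [TopologicalSpace Y] [LindelofSpace Y] : LindelofSpace (X × Y) := by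
  rcases isEmpty_or_nonempty Y with hY | hY
  · infer_instance
  refine ⟨isLindelof_of_countable_subcover fun c hc hcov => ?_⟩
  obtain ⟨S, hS, hScov, hSkc⟩ := exists_nonempty_compact_cover_mk_le_kc X
  choose U V G hU hV hVcov hUVG using
    fun K : S => exists_seq_tubes hc (univ_subset_iff.mp hcov) (hS K K.2).1
  have hcovUV : ∀ p : X × Y, ∃ k : S × ℕ, p.1 ∈ U k.1 k.2 ∧ p.2 ∈ V k.1 k.2 := by
    intro p
    obtain ⟨K, hK, hx⟩ := hScov ▸ mem_univ p.1
    obtain ⟨n, hy⟩ := mem_iUnion.mp (hVcov ⟨K, hK⟩ ▸ mem_univ p.2)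
    exact ⟨(⟨K, hK⟩, n), (hU _ n).2 hx, hy⟩
  have hcardS : #(S × ℕ) ≤ max (kc X) ℵ₀ := calc
    #(S × ℕ) = #S * ℵ₀ := by simp [Cardinal.mk_prod]
    _ ≤ max (max #S ℵ₀) ℵ₀ := Cardinal.mul_le_max _ _
    _ ≤ max (kc X) ℵ₀ := by rw [max_assoc, max_self]; exact max_le_max_right _ hSkc
  obtain ⟨W, hW, hWω, hWUV⟩ := exists_isOmegaInjective_refinement (κ := kc X)
    (fun k => (hU k.1 k.2).1) (fun k => hV k.1 k.2)
    (fun k => hcard _ (hU k.1 k.2).1 ((hS _ k.1.2).2.mono (hU k.1 k.2).2)) hcardS hcovUV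
  obtain ⟨W', hW'W, hW'c, hW'⟩ := hpl.exists_countable_isBoxCover_subset hW hWω
  exact BoxRefines.exists_countable_subcover (fun k : S × ℕ => hUVG k.1 k.2) hW'c hW'
    fun w hw => hWUV w (hW'W hw)

theorem stmt10_general {X : Type u} [TopologicalSpace X] [T1Space X]
    (hcard : ∀ U : Set X, IsOpen U → U.Nonempty → kc X ≤ Cardinal.mk U) :
    ProductivelyLindelof X ↔ HasPL X :=
  ⟨ProductivelyLindelof.hasPL, fun hpl Y _ _ => hpl.lindelofSpace_prod hcard Y⟩

theorem stmt10 {X : Type u} [TopologicalSpace X] [T1Space X] [LindelofSpace X]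
    (hcard : ∀ U : Set X, IsOpen U → U.Nonempty → kc X ≤ Cardinal.mk U) :
    ProductivelyLindelof X ↔ HasPL X :=
  stmt10_general hcard
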